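/- Let ℏ > 0. Let U : ℝ² → ℂ be measurable with ∫_{ℝ²} ‖k'‖² |U(k')| dk' < ∞. Let g : ℝ²×ℝ² → ℂ be Lebesgue integrable, let η : ℝ² → ℂ be measurable and bounded, and let φ : ℝ² → ℂ be twice continuously differentiable with M := sup_{k∈ℝ²} ‖D²φ(k)‖ < ∞ (operator norm of the second derivative as a bilinear map). Then the Hartree-type Taylor-remainder pairing obeys the bound: | ∫_{ℝ²} U(k') ∫_{ℝ²}∫_{ℝ²} e^{i k'·x} g(x,k) η(x) · (1/ℏ) [ φ(k − (ℏ/2)k') − φ(k + (ℏ/2)k') + ℏ (k'·∇φ(k)) ] dx dk dk' | ≤ (ℏ/4) · ( ∫_{ℝ²} ‖k'‖² |U(k')| dk' ) · ‖g‖_{L¹} · ‖η‖_{∞} · M. -/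

import Mathlib

/-!
The bracket is the difference of the two first-order Taylor remainders of `φ` at `k` with
increments `∓(ℏ/2)k'`, each at most `(M/2)(ℏ/2)²‖k'‖²` in norm, so after the factor `1/ℏ` it
is bounded by `(ℏ/4) M ‖k'‖²`. As `|e^{i k'·x}| = 1` and `|η| ≤ Cη`, the inner integral is then
at most `(ℏ/4) Cη M ‖k'‖² ‖g‖_{L¹}`, and integrating against `|U|` gives the bound.
-/

open MeasureTheory Complex

section Taylor

variable {E F : Type*} [NormedAddCommGroup E] [NormedSpace ℝ E]
  [NormedAddCommGroup F] [NormedSpace ℝ F] {φ : E → F} {M : ℝ}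

theorem norm_fderiv_sub_fderiv_le (hφ : ContDiff ℝ 2 φ)
    (hM : ∀ q, ‖iteratedFDeriv ℝ 2 φ q‖ ≤ M) (a b : E) :
    ‖fderiv ℝ φ a - fderiv ℝ φ b‖ ≤ M * ‖a - b‖ := by
  have hdiff : Differentiable ℝ (fderiv ℝ φ) :=
    (hφ.fderiv_right (m := 1) le_rfl).differentiable one_ne_zero
  have hbound (y : E) : ‖fderiv ℝ (fderiv ℝ φ) y‖ ≤ M := by
    rw [← norm_iteratedFDeriv_one, norm_iteratedFDeriv_fderiv]
    exact hM y
  exact (convex_univ.norm_image_sub_le_of_norm_fderiv_le (fun y _ => hdiff y)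
    (fun y _ => hbound y) (Set.mem_univ b) (Set.mem_univ a))

theorem norm_sub_sub_fderiv_le (hφ : ContDiff ℝ 2 φ)
    (hM : ∀ q, ‖iteratedFDeriv ℝ 2 φ q‖ ≤ M) (x v : E) :
    ‖φ (x + v) - φ x - fderiv ℝ φ x v‖ ≤ M / 2 * ‖v‖ ^ 2 := by
  set r : ℝ → F := fun t => φ (x + t • v) - φ x - t • fderiv ℝ φ x v
  have hr (t : ℝ) : HasDerivAt r (fderiv ℝ φ (x + t • v) v - fderiv ℝ φ x v) t := by
    have hline : HasDerivAt (fun t : ℝ => x + t • v) v t := by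
      simpa using ((hasDerivAt_id t).smul_const v).const_add x
    have hcomp := (hφ.differentiable two_ne_zero (x + t • v)).hasFDerivAt.comp_hasDerivAt t hline
    exact (hcomp.sub_const (φ x)).sub
      (by simpa using (hasDerivAt_id t).smul_const (fderiv ℝ φ x v))
  have hr_deriv_le : ∀ t ∈ Set.Ico (0 : ℝ) 1,
      ‖fderiv ℝ φ (x + t • v) v - fderiv ℝ φ x v‖ ≤ M * ‖v‖ ^ 2 * t := by
    intro t ht
    calc ‖fderiv ℝ φ (x + t • v) v - fderiv ℝ φ x v‖
        ≤ ‖fderiv ℝ φ (x + t • v) - fderiv ℝ φ x‖ * ‖v‖ :=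
          (fderiv ℝ φ (x + t • v) - fderiv ℝ φ x).le_opNorm v
      _ ≤ M * ‖(x + t • v) - x‖ * ‖v‖ := by
          gcongr; exact norm_fderiv_sub_fderiv_le hφ hM _ _
      _ = M * ‖v‖ ^ 2 * t := by
          rw [add_sub_cancel_left, norm_smul, Real.norm_of_nonneg ht.1]; ring
  have hB (t : ℝ) : HasDerivAt (fun t => M / 2 * ‖v‖ ^ 2 * t ^ 2) (M * ‖v‖ ^ 2 * t) t :=
    ((hasDerivAt_pow 2 t).const_mul (M / 2 * ‖v‖ ^ 2)).congr_deriv (by push_cast; ring)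
  simpa [r] using image_norm_le_of_norm_deriv_right_le_deriv_boundary (f := r)
    (fun t _ => (hr t).continuousAt.continuousWithinAt) (fun t _ => (hr t).hasDerivWithinAt)
    (by simp [r]) hB hr_deriv_le (Set.right_mem_Icc.2 zero_le_one)

theorem norm_sub_add_two_smul_fderiv_le (hφ : ContDiff ℝ 2 φ)
    (hM : ∀ q, ‖iteratedFDeriv ℝ 2 φ q‖ ≤ M) (x v : E) :
    ‖φ (x - v) - φ (x + v) + (2 : ℝ) • fderiv ℝ φ x v‖ ≤ M * ‖v‖ ^ 2 := by
  have hsplit : φ (x - v) - φ (x + v) + (2 : ℝ) • fderiv ℝ φ x v =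
      (φ (x + -v) - φ x - fderiv ℝ φ x (-v)) - (φ (x + v) - φ x - fderiv ℝ φ x v) := by
    rw [map_neg, ← sub_eq_add_neg, two_smul]; abel
  calc ‖φ (x - v) - φ (x + v) + (2 : ℝ) • fderiv ℝ φ x v‖
      ≤ M / 2 * ‖-v‖ ^ 2 + M / 2 * ‖v‖ ^ 2 := by
        rw [hsplit]
        exact (norm_sub_le _ _).trans (add_le_add (norm_sub_sub_fderiv_le hφ hM x (-v))
          (norm_sub_sub_fderiv_le hφ hM x v))
    _ = M * ‖v‖ ^ 2 := by rw [norm_neg]; ring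

end Taylor

theorem norm_sub_add_mul_fderiv_le {E : Type*} [NormedAddCommGroup E] [NormedSpace ℝ E]
    {φ : E → ℂ} {M : ℝ} (hφ : ContDiff ℝ 2 φ) (hM : ∀ q, ‖iteratedFDeriv ℝ 2 φ q‖ ≤ M)
    (ℏ : ℝ) (k k' : E) :
    ‖φ (k - (ℏ / 2) • k') - φ (k + (ℏ / 2) • k') + (ℏ : ℂ) * fderiv ℝ φ k k'‖ ≤
      M * (ℏ / 2) ^ 2 * ‖k'‖ ^ 2 := by
  have hlin : (ℏ : ℂ) * fderiv ℝ φ k k' = (2 : ℝ) • fderiv ℝ φ k ((ℏ / 2) • k') := by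
    rw [map_smul, smul_smul, Complex.real_smul]; push_cast; ring
  rw [hlin]
  refine (norm_sub_add_two_smul_fderiv_le hφ hM k _).trans_eq ?_
  rw [norm_smul, mul_pow, Real.norm_eq_abs, sq_abs]; ring

theorem norm_integral_le_integral_mul_of_norm_le {α G : Type*} [MeasurableSpace α]
    {μ : Measure α} [NormedAddCommGroup G] [NormedSpace ℝ G] {f : α → G} {w : α → ℝ}
    (hw : Integrable w μ) {C : ℝ} (h : ∀ a, ‖f a‖ ≤ w a * C) :
    ‖∫ a, f a ∂μ‖ ≤ (∫ a, w a ∂μ) * C := by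
  rw [← integral_mul_const]
  exact norm_integral_le_of_norm_le (hw.mul_const C) (.of_forall h)

theorem hartree_remainder_bound_general (ℏ : ℝ) (hℏ : 0 < ℏ)
    (U : EuclideanSpace ℝ (Fin 2) → ℂ)
    (hU : Integrable fun k' : EuclideanSpace ℝ (Fin 2) => ‖k'‖ ^ 2 * ‖U k'‖)
    (g : EuclideanSpace ℝ (Fin 2) × EuclideanSpace ℝ (Fin 2) → ℂ)
    (hg : Integrable g)
    (η : EuclideanSpace ℝ (Fin 2) → ℂ)
    (Cη : ℝ) (hCη : ∀ x, ‖η x‖ ≤ Cη)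
    (φ : EuclideanSpace ℝ (Fin 2) → ℂ) (hφ : ContDiff ℝ 2 φ)
    (M : ℝ) (hM : ∀ q : EuclideanSpace ℝ (Fin 2), ‖iteratedFDeriv ℝ 2 φ q‖ ≤ M) :
    ‖∫ k' : EuclideanSpace ℝ (Fin 2), U k' *
        ∫ p : EuclideanSpace ℝ (Fin 2) × EuclideanSpace ℝ (Fin 2),
          Complex.exp (Complex.I * ((inner ℝ k' p.1 : ℝ) : ℂ)) *
            g p * η p.1 * (1 / (ℏ : ℂ)) *
            (φ (p.2 - (ℏ / 2) • k') - φ (p.2 + (ℏ / 2) • k')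
              + (ℏ : ℂ) * fderiv ℝ φ p.2 k')‖ ≤
      (ℏ / 4) * (∫ k' : EuclideanSpace ℝ (Fin 2), ‖k'‖ ^ 2 * ‖U k'‖) *
        (∫ p : EuclideanSpace ℝ (Fin 2) × EuclideanSpace ℝ (Fin 2), ‖g p‖) * Cη * M := by
  have hCη0 : 0 ≤ Cη := (norm_nonneg _).trans (hCη 0)
  refine (norm_integral_le_integral_mul_of_norm_le
    (C := (∫ p, ‖g p‖) * (ℏ / 4 * Cη * M)) hU fun k' => ?_).trans_eq (by ring)
  rw [norm_mul]
  refine (mul_le_mul_of_nonneg_left (norm_integral_le_integral_mul_of_norm_le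
    (C := ℏ / 4 * Cη * M * ‖k'‖ ^ 2) hg.norm fun p => ?_) (norm_nonneg _)).trans_eq (by ring)
  have hphase : ‖cexp (I * (inner ℝ k' p.1 : ℝ))‖ = 1 := by
    rw [mul_comm]; exact norm_exp_ofReal_mul_I _
  rw [norm_mul, norm_mul, norm_mul, norm_mul, hphase, one_mul, one_div, norm_inv, norm_real,
    Real.norm_of_nonneg hℏ.le]
  calc _ ≤ ‖g p‖ * Cη * ℏ⁻¹ * (M * (ℏ / 2) ^ 2 * ‖k'‖ ^ 2) := by
        gcongr
        exacts [hCη p.1, norm_sub_add_mul_fderiv_le hφ hM ℏ p.2 k']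
    _ = ‖g p‖ * (ℏ / 4 * Cη * M * ‖k'‖ ^ 2) := by field_simp; ring

/-- Weak-form error estimate for the Hartree-type interaction term:
for measurable `U` with `∫ ‖k'‖²|U(k')| dk' < ∞`, integrable `g`, bounded measurable
`η`, and `φ ∈ C²` with `‖D²φ‖ ≤ M`, the pairing against the second-order symmetric
Taylor remainder of `φ` is bounded by
`(ℏ/4) (∫ ‖k'‖²|U(k')| dk') ‖g‖_{L¹} ‖η‖_∞ M`. -/
theorem hartree_remainder_bound (ℏ : ℝ) (hℏ : 0 < ℏ)
    (U : EuclideanSpace ℝ (Fin 2) → ℂ) (hUmeas : Measurable U)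
    (hU : Integrable fun k' : EuclideanSpace ℝ (Fin 2) => ‖k'‖ ^ 2 * ‖U k'‖)
    (g : EuclideanSpace ℝ (Fin 2) × EuclideanSpace ℝ (Fin 2) → ℂ)
    (hg : Integrable g)
    (η : EuclideanSpace ℝ (Fin 2) → ℂ) (hη : Measurable η)
    (Cη : ℝ) (hCη : ∀ x, ‖η x‖ ≤ Cη)
    (φ : EuclideanSpace ℝ (Fin 2) → ℂ) (hφ : ContDiff ℝ 2 φ)
    (M : ℝ) (hM : ∀ q : EuclideanSpace ℝ (Fin 2), ‖iteratedFDeriv ℝ 2 φ q‖ ≤ M) :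
    ‖∫ k' : EuclideanSpace ℝ (Fin 2), U k' *
        ∫ p : EuclideanSpace ℝ (Fin 2) × EuclideanSpace ℝ (Fin 2),
          Complex.exp (Complex.I * ((inner ℝ k' p.1 : ℝ) : ℂ)) *
            g p * η p.1 * (1 / (ℏ : ℂ)) *
            (φ (p.2 - (ℏ / 2) • k') - φ (p.2 + (ℏ / 2) • k')
              + (ℏ : ℂ) * fderiv ℝ φ p.2 k')‖ ≤
      (ℏ / 4) * (∫ k' : EuclideanSpace ℝ (Fin 2), ‖k'‖ ^ 2 * ‖U k'‖) *
        (∫ p : EuclideanSpace ℝ (Fin 2) × EuclideanSpace ℝ (Fin 2), ‖g p‖) * Cη * M :=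
  hartree_remainder_bound_general ℏ hℏ U hU g hg η Cη hCη φ hφ M hM
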